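/- Let d ≥ 1, σ > 0, and let P be a Borel probability measure on ℝ^d with X ~ P. Then ∫_{ℝ^d} √(Var_P(φ_σ(x−·))) dx ≤ 8^{d/2} + (2^{d/2+1}/(σ^d Γ(d/2))) ∫_0^∞ t^{d−1} √(P(‖X‖ > t)) dt. -/

import Mathlib

open MeasureTheory ProbabilityTheory Real Filter
open scoped ENNReal NNReal

/-- The isotropic Gaussian density `φ_σ` on `ℝ^d`. -/
noncomputable def gaussDensity (d : ℕ) (σ : ℝ) (x : EuclideanSpace ℝ (Fin d)) : ℝ :=
  (2 * π * σ ^ 2) ^ (-(d : ℝ) / 2) * Real.exp (-‖x‖ ^ 2 / (2 * σ ^ 2))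

/-!
Bound the variance by the second moment and split according to whether `‖y‖ > ‖x‖ / 2`.
If not, `‖x - y‖ ≥ ‖x‖ / 2`, so `φ_σ(x - y) ≤ φ_σ(x / 2)`; if so, use `φ_σ(x - y) ≤ φ_σ(0)`.
Since `√(a² + b² p) ≤ a + b √p`, this gives
`√Var_P(φ_σ(x - ·)) ≤ φ_σ(x / 2) + φ_σ(0) √P(‖X‖ > ‖x / 2‖)`,
a function of `x / 2`. Substituting `x = 2z` multiplies the integral by `2^d ≤ 8^{d/2}`;
the Gaussian integrates to `1`, and the tail term is integrated in polar coordinates, the unit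
sphere having area `2 π^{d/2} / Γ(d/2)`.
-/

open Set Metric Module

section HaarMeasure

variable {E : Type*} [NormedAddCommGroup E] [NormedSpace ℝ E] [MeasurableSpace E] [BorelSpace E]
  [FiniteDimensional ℝ E] (μ : Measure E) [μ.IsAddHaarMeasure]

theorem lintegral_comp_smul_addHaar (f : E → ℝ≥0∞) {r : ℝ} (hr : r ≠ 0) :
    ∫⁻ x, f (r • x) ∂μ = ENNReal.ofReal |(r ^ finrank ℝ E)⁻¹| * ∫⁻ x, f x ∂μ := by
  rw [← smul_eq_mul, ← lintegral_smul_measure, ← Measure.map_addHaar_smul μ hr]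
  exact (lintegral_map_equiv f (MeasurableEquiv.smul₀ r hr)).symm

theorem lintegral_fun_norm_addHaar [Nontrivial E] (g : ℝ → ℝ≥0∞) (hg : Measurable g) :
    ∫⁻ x, g ‖x‖ ∂μ = finrank ℝ E * μ (ball 0 1) *
      ∫⁻ t in Ioi (0 : ℝ), ENNReal.ofReal (t ^ (finrank ℝ E - 1)) * g t := by
  have hgm : Measurable fun p : sphere (0 : E) 1 × Ioi (0 : ℝ) => g p.2 :=
    hg.comp (measurable_subtype_coe.comp measurable_snd)
  calc
    ∫⁻ x, g ‖x‖ ∂μ = ∫⁻ x : ({(0 : E)}ᶜ : Set E), g ‖x.1‖ ∂(μ.comap (↑)) := by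
      rw [lintegral_subtype_comap (measurableSet_singleton _).compl (fun x => g ‖x‖),
        restrict_compl_singleton]
    _ = ∫⁻ p : sphere (0 : E) 1 × Ioi (0 : ℝ), g p.2
          ∂(μ.toSphere.prod (.volumeIoiPow (finrank ℝ E - 1))) := by
      rw [← μ.measurePreserving_homeomorphUnitSphereProd.lintegral_comp hgm]
      simp
    _ = μ.toSphere univ * ∫⁻ t : Ioi (0 : ℝ), g t ∂(.volumeIoiPow (finrank ℝ E - 1)) := by
      rw [lintegral_prod _ hgm.aemeasurable]
      simp [lintegral_const, mul_comm]
    _ = _ := by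
      rw [Measure.toSphere_apply_univ, Measure.volumeIoiPow]
      congr 1
      rw [lintegral_withDensity_eq_lintegral_mul _
          ((measurable_subtype_coe.pow_const _).ennreal_ofReal :
            Measurable fun t : Ioi (0 : ℝ) => ENNReal.ofReal (t.1 ^ (finrank ℝ E - 1)))
          (show Measurable fun t : Ioi (0 : ℝ) => g t.1 from hg.comp measurable_subtype_coe)]
      exact lintegral_subtype_comap measurableSet_Ioi
        (fun t => ENNReal.ofReal (t ^ (finrank ℝ E - 1)) * g t)

end HaarMeasure

namespace EuclideanSpace

variable {ι : Type*} [Fintype ι] [Nonempty ι]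

theorem card_mul_volume_ball_one :
    Fintype.card ι * volume (ball (0 : EuclideanSpace ℝ ι) 1) =
      ENNReal.ofReal (2 * π ^ ((Fintype.card ι : ℝ) / 2) / Gamma (Fintype.card ι / 2)) := by
  have hn : 0 < (Fintype.card ι : ℝ) / 2 := by positivity
  rw [EuclideanSpace.volume_ball, ENNReal.ofReal_one, one_pow, one_mul,
    ← ENNReal.ofReal_natCast, ← ENNReal.ofReal_mul (Nat.cast_nonneg _), Gamma_add_one hn.ne',
    Real.sqrt_eq_rpow, ← Real.rpow_natCast, ← Real.rpow_mul pi_pos.le]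
  congr 1
  field_simp

theorem lintegral_ofReal_fun_norm {h : ℝ → ℝ} (hh : Measurable h) :
    ∫⁻ x : EuclideanSpace ℝ ι, ENNReal.ofReal (h ‖x‖) =
      ENNReal.ofReal (2 * π ^ ((Fintype.card ι : ℝ) / 2) / Gamma (Fintype.card ι / 2)) *
        ∫⁻ t in Ioi (0 : ℝ), ENNReal.ofReal (t ^ (Fintype.card ι - 1) * h t) := by
  rw [lintegral_fun_norm_addHaar volume _ hh.ennreal_ofReal, finrank_euclideanSpace,
    card_mul_volume_ball_one]
  congr 1
  refine setLIntegral_congr_fun measurableSet_Ioi fun t ht => ?_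
  rw [ENNReal.ofReal_mul (pow_nonneg ht.out.le _)]

end EuclideanSpace

theorem sqrt_variance_le_add_mul_sqrt_measureReal {Ω : Type*} [MeasurableSpace Ω]
    {P : Measure Ω} [IsProbabilityMeasure P] {X : Ω → ℝ} (hX : AEStronglyMeasurable X P)
    {s : Set Ω} (hs : MeasurableSet s) {a b : ℝ} (ha : 0 ≤ a) (hb : 0 ≤ b)
    (hXs : ∀ ω, X ω ^ 2 ≤ a ^ 2 + s.indicator (fun _ => b ^ 2) ω) :
    √(variance X P) ≤ a + b * √(P.real s) := by
  have hvar : variance X P ≤ a ^ 2 + b ^ 2 * P.real s :=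
    calc variance X P ≤ ∫ ω, X ω ^ 2 ∂P := by
          simpa using variance_le_expectation_sq hX
      _ ≤ ∫ ω, (a ^ 2 + s.indicator (fun _ => b ^ 2) ω) ∂P :=
          integral_mono_of_nonneg (.of_forall fun ω => sq_nonneg _)
            ((integrable_const _).add ((integrable_const _).indicator hs)) (.of_forall hXs)
      _ = a ^ 2 + b ^ 2 * P.real s := by
          rw [integral_add (integrable_const _) ((integrable_const _).indicator hs),
            integral_indicator_const _ hs]
          simp [mul_comm]
  rw [Real.sqrt_le_left (by positivity)]
  nlinarith [Real.sq_sqrt (measureReal_nonneg (μ := P) (s := s)),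
    mul_nonneg (mul_nonneg ha hb) (Real.sqrt_nonneg (P.real s))]

theorem measurable_measureReal_norm_gt {E : Type*} [Norm E] [MeasurableSpace E]
    (P : Measure E) [IsFiniteMeasure P] : Measurable fun t : ℝ => P.real {y | ‖y‖ > t} :=
  Antitone.measurable fun _ _ hst => measureReal_mono fun _ hy => lt_of_le_of_lt hst hy

theorem two_pow_le_eight_rpow (d : ℕ) : (2 : ℝ) ^ d ≤ 8 ^ ((d : ℝ) / 2) :=
  calc (2 : ℝ) ^ d = 4 ^ ((d : ℝ) / 2) := by
        rw [show (4 : ℝ) = 2 ^ (2 : ℝ) by norm_num, ← Real.rpow_mul zero_le_two,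
          mul_div_cancel₀ _ two_ne_zero, Real.rpow_natCast]
    _ ≤ 8 ^ ((d : ℝ) / 2) := Real.rpow_le_rpow (by norm_num) (by norm_num) (by positivity)

section GaussDensity

variable {d : ℕ} {σ : ℝ}

theorem gaussDensity_nonneg (x : EuclideanSpace ℝ (Fin d)) : 0 ≤ gaussDensity d σ x := by
  unfold gaussDensity; positivity

theorem continuous_gaussDensity : Continuous (gaussDensity d σ) := by
  unfold gaussDensity; fun_prop

theorem gaussDensity_le_gaussDensity_of_norm_le {x y : EuclideanSpace ℝ (Fin d)}
    (h : ‖x‖ ≤ ‖y‖) : gaussDensity d σ y ≤ gaussDensity d σ x := by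
  unfold gaussDensity
  gcongr

theorem gaussDensity_zero (hσ : 0 < σ) :
    gaussDensity d σ 0 = (2 ^ ((d : ℝ) / 2) * π ^ ((d : ℝ) / 2) * σ ^ d)⁻¹ := by
  rw [show gaussDensity d σ 0 = (2 * π * σ ^ 2) ^ (-(d : ℝ) / 2) by simp [gaussDensity],
    neg_div, Real.rpow_neg (by positivity), Real.mul_rpow (by positivity) (by positivity),
    Real.mul_rpow (by positivity) (by positivity), ← Real.rpow_natCast σ 2,
    ← Real.rpow_mul hσ.le, ← Real.rpow_natCast σ d]
  congr 3
  push_cast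
  ring

theorem integral_gaussDensity (hσ : σ ≠ 0) : ∫ x, gaussDensity d σ x = 1 := by
  have hb : 0 < 1 / (2 * σ ^ 2) := by positivity
  have hexp : ∀ x : EuclideanSpace ℝ (Fin d),
      -‖x‖ ^ 2 / (2 * σ ^ 2) = -(1 / (2 * σ ^ 2)) * ‖x‖ ^ 2 := fun x => by ring
  simp_rw [gaussDensity, hexp]
  rw [integral_const_mul, GaussianFourier.integral_rexp_neg_mul_sq_norm hb,
    finrank_euclideanSpace_fin, show π / (1 / (2 * σ ^ 2)) = 2 * π * σ ^ 2 by field_simp,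
    ← Real.rpow_add (by positivity), neg_div, neg_add_cancel, Real.rpow_zero]

theorem lintegral_gaussDensity (hσ : σ ≠ 0) :
    ∫⁻ x, ENNReal.ofReal (gaussDensity d σ x) = 1 := by
  have hint : Integrable (gaussDensity d σ) :=
    .of_integral_ne_zero (by rw [integral_gaussDensity hσ]; exact one_ne_zero)
  rw [← ofReal_integral_eq_lintegral_ofReal hint (.of_forall gaussDensity_nonneg),
    integral_gaussDensity hσ, ENNReal.ofReal_one]

theorem gaussDensity_zero_mul_two_pow_mul_area_sphere (hd : 1 ≤ d) (hσ : 0 < σ) :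
    gaussDensity d σ 0 * (2 ^ d * (2 * π ^ ((d : ℝ) / 2) / Gamma (d / 2))) =
      2 ^ ((d : ℝ) / 2 + 1) / (σ ^ d * Gamma (d / 2)) := by
  have := Gamma_pos_of_pos (show 0 < (d : ℝ) / 2 by positivity)
  rw [gaussDensity_zero hσ, Real.rpow_add_one two_ne_zero, ← Real.rpow_natCast 2 d,
    ← add_halves (d : ℝ), Real.rpow_add two_pos, add_halves]
  field_simp

theorem sqrt_variance_gaussDensity_sub_le (σ : ℝ)
    (P : Measure (EuclideanSpace ℝ (Fin d))) [IsProbabilityMeasure P]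
    (x : EuclideanSpace ℝ (Fin d)) :
    √(variance (fun y => gaussDensity d σ (x - y)) P) ≤
      gaussDensity d σ ((2 : ℝ)⁻¹ • x) +
        gaussDensity d σ 0 * √(P.real {y | ‖y‖ > ‖(2 : ℝ)⁻¹ • x‖}) := by
  refine sqrt_variance_le_add_mul_sqrt_measureReal
    (continuous_gaussDensity.comp (continuous_sub_left x)).aestronglyMeasurable
    (measurableSet_lt measurable_const measurable_norm) (gaussDensity_nonneg _)
    (gaussDensity_nonneg _) fun y => ?_
  change gaussDensity d σ (x - y) ^ 2 ≤ _
  by_cases hy : y ∈ {y : EuclideanSpace ℝ (Fin d) | ‖y‖ > ‖(2 : ℝ)⁻¹ • x‖}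
  · rw [indicator_of_mem hy]
    have hle_zero := pow_le_pow_left₀ (gaussDensity_nonneg _)
      (gaussDensity_le_gaussDensity_of_norm_le (σ := σ)
        (norm_zero.trans_le (norm_nonneg (x - y)))) 2
    nlinarith [sq_nonneg (gaussDensity d σ ((2 : ℝ)⁻¹ • x))]
  · rw [indicator_of_notMem hy, add_zero]
    have hy' : ‖y‖ ≤ ‖(2 : ℝ)⁻¹ • x‖ := not_lt.mp (show ¬‖(2 : ℝ)⁻¹ • x‖ < ‖y‖ from hy)
    have hnorm : ‖(2 : ℝ)⁻¹ • x‖ = ‖x‖ / 2 := by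
      rw [norm_smul, norm_inv, Real.norm_two, inv_mul_eq_div]
    have hhalf : ‖(2 : ℝ)⁻¹ • x‖ ≤ ‖x - y‖ := by
      linarith [norm_sub_norm_le x y]
    exact pow_le_pow_left₀ (gaussDensity_nonneg _)
      (gaussDensity_le_gaussDensity_of_norm_le hhalf) 2

end GaussDensity

/-- **Explicit bound on the integral of the standard deviation of the smoothed density:**
`∫ √(Var_P(φ_σ(x−·))) dx ≤ 8^{d/2} + (2^{d/2+1}/(σ^d Γ(d/2))) ∫₀^∞ t^{d−1} √(P(‖X‖>t)) dt`. -/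
theorem sqrt_variance_integral_bound
    (d : ℕ) (hd : 1 ≤ d) (σ : ℝ) (hσ : 0 < σ)
    (P : Measure (EuclideanSpace ℝ (Fin d))) [IsProbabilityMeasure P] :
    ∫⁻ x, ENNReal.ofReal
        (Real.sqrt (variance (fun y => gaussDensity d σ (x - y)) P))
      ≤ ENNReal.ofReal ((8 : ℝ) ^ ((d : ℝ) / 2)) +
        ENNReal.ofReal ((2 : ℝ) ^ ((d : ℝ) / 2 + 1) / (σ ^ d * Real.Gamma (d / 2))) *
          ∫⁻ t in Set.Ioi (0 : ℝ), ENNReal.ofReal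
            (t ^ (d - 1) * Real.sqrt ((P {y | ‖y‖ > t}).toReal)) := by
  have : Nonempty (Fin d) := ⟨⟨0, hd⟩⟩
  set c := gaussDensity d σ 0
  set tail : ℝ → ℝ := fun t => √(P.real {y | ‖y‖ > t})
  have hc : 0 ≤ c := gaussDensity_nonneg 0
  have hradial : ∀ t, t ^ (d - 1) * (c * tail t) = c * (t ^ (d - 1) * tail t) := fun t => by ring
  calc ∫⁻ x, ENNReal.ofReal √(variance (fun y => gaussDensity d σ (x - y)) P)
      ≤ ∫⁻ x, ENNReal.ofReal (gaussDensity d σ ((2 : ℝ)⁻¹ • x)) +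
          ENNReal.ofReal (c * tail ‖(2 : ℝ)⁻¹ • x‖) :=
        lintegral_mono fun x => (ENNReal.ofReal_le_ofReal
          (sqrt_variance_gaussDensity_sub_le σ P x)).trans ENNReal.ofReal_add_le
    _ = ENNReal.ofReal (2 ^ d) +
          ENNReal.ofReal (c * (2 ^ d * (2 * π ^ ((d : ℝ) / 2) / Gamma (d / 2)))) *
            ∫⁻ t in Ioi (0 : ℝ), ENNReal.ofReal (t ^ (d - 1) * tail t) := by
        rw [lintegral_comp_smul_addHaar volume
            (fun z => ENNReal.ofReal (gaussDensity d σ z) + ENNReal.ofReal (c * tail ‖z‖))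
            (by norm_num),
          lintegral_add_left continuous_gaussDensity.measurable.ennreal_ofReal,
          lintegral_gaussDensity hσ.ne', EuclideanSpace.lintegral_ofReal_fun_norm
            (h := fun r => c * tail r) (measurable_const.mul (measurable_measureReal_norm_gt P).sqrt)]
        simp_rw [Fintype.card_fin, hradial, ENNReal.ofReal_mul hc]
        rw [lintegral_const_mul' _ _ ENNReal.ofReal_ne_top, finrank_euclideanSpace_fin,
          show |((2 : ℝ)⁻¹ ^ d)⁻¹| = 2 ^ d by simp, ENNReal.ofReal_mul (by positivity)]
        ring
    _ ≤ _ := by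
        rw [gaussDensity_zero_mul_two_pow_mul_area_sphere hd hσ]
        exact add_le_add_left (ENNReal.ofReal_le_ofReal (two_pow_le_eight_rpow d)) _
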